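/- Let G_1, …, G_T be random matrices in ℝ^{m×n} with finite second moments, let β ∈ [0, 1), and let A ∈ ℝ^{m×m} and B ∈ ℝ^{n×n} be symmetric positive definite. Define Z_t := A G_t B and assume the matrices EMA_{t=1}^T(E[G_t B^2 G_tᵀ]) and EMA_{t=1}^T(E[G_tᵀ A^2 G_t]) are invertible. Then the sequence {Z_t} is time-averaged orthogonal in expectation, i.e. EMA_{t=1}^T(E[Z_t Z_tᵀ]) = I_m and EMA_{t=1}^T(E[Z_tᵀ Z_t]) = I_n, if and only if A = EMA_{t=1}^T(E[G_t B^2 G_tᵀ])^{−1/2} and B = EMA_{t=1}^T(E[G_tᵀ A^2 G_t])^{−1/2}. -/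

import Mathlib

open MeasureTheory Matrix

/-- Entrywise mean of a random matrix. -/
noncomputable def matMean {Ω : Type*} [MeasurableSpace Ω] (μ : Measure Ω) {a b : ℕ}
    (X : Ω → Matrix (Fin a) (Fin b) ℝ) : Matrix (Fin a) (Fin b) ℝ :=
  Matrix.of fun i j => ∫ ω, X ω i j ∂μ

/-- Exponential moving average `EMA_{t=1}^T(X_t) = (1 − β) Σ_{t=1}^T β^{T−t} X_t` of a
finite sequence of square matrices (indexed here by `t = 0, …, T−1`, so that the weight of
`X_t` is `β^{T−1−t}`). -/
noncomputable def ema (β : ℝ) {T a : ℕ} (X : Fin T → Matrix (Fin a) (Fin a) ℝ) :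
    Matrix (Fin a) (Fin a) ℝ :=
  (1 - β) • ∑ t : Fin T, β ^ (T - 1 - (t : ℕ)) • X t

section
open scoped ComplexOrder

/-- The square root of a positive semidefinite matrix, as `Matrix.PosSemidef.sqrt` was
defined in Mathlib (Dec 2024); that declaration has since been removed. -/
noncomputable def Matrix.PosSemidef.sqrt {n : Type*} [Fintype n] [DecidableEq n] {𝕜 : Type*}
    [RCLike 𝕜] {A : Matrix n n 𝕜} (hA : A.PosSemidef) : Matrix n n 𝕜 :=
  hA.1.eigenvectorUnitary.1 * diagonal ((↑) ∘ Real.sqrt ∘ hA.1.eigenvalues) *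
    (star hA.1.eigenvectorUnitary : Matrix n n 𝕜)
end

section
open scoped MatrixOrder

lemma psd_sqrt_eq {a : ℕ} {L : Matrix (Fin a) (Fin a) ℝ} (hL : L.PosSemidef) :
    hL.sqrt = CFC.sqrt L := by
  rw [CFC.sqrt_eq_real_sqrt L hL.nonneg, cfcₙ_eq_cfc (hf0 := Real.sqrt_zero), hL.1.cfc_eq]
  simp [Matrix.PosSemidef.sqrt, Matrix.IsHermitian.cfc, Unitary.conjStarAlgAut_apply]

lemma psd_sqrt_mul_self {a : ℕ} {L : Matrix (Fin a) (Fin a) ℝ} (hL : L.PosSemidef) :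
    hL.sqrt * hL.sqrt = L := by
  rw [psd_sqrt_eq]; exact CFC.sqrt_mul_sqrt_self L hL.nonneg

lemma psd_eq_sqrt_of_sq_eq {a : ℕ} {P L : Matrix (Fin a) (Fin a) ℝ} (hP : P.PosSemidef)
    (hL : L.PosSemidef) (h : P ^ 2 = L) : P = hL.sqrt := by
  rw [psd_sqrt_eq]
  exact (CFC.sqrt_unique (by rw [← pow_two]; exact h) hP.nonneg).symm
end

lemma matMean_conj {Ω : Type*} [MeasurableSpace Ω] (μ : Measure Ω) {a : ℕ}
    (M N : Matrix (Fin a) (Fin a) ℝ) (X : Ω → Matrix (Fin a) (Fin a) ℝ)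
    (hX : ∀ i j, Integrable (fun ω => X ω i j) μ) :
    matMean μ (fun ω => M * X ω * N) = M * matMean μ X * N := by
  ext i j
  have hrw : ∀ ω, (M * X ω * N) i j = ∑ l, ∑ k, M i k * X ω k l * N l j := by
    intro ω
    simp [Matrix.mul_apply, Finset.sum_mul]
  simp only [matMean, Matrix.of_apply]
  calc ∫ ω, (M * X ω * N) i j ∂μ
      = ∫ ω, ∑ l, ∑ k, M i k * X ω k l * N l j ∂μ := by simp_rw [hrw]
    _ = ∑ l, ∑ k, ∫ ω, M i k * X ω k l * N l j ∂μ := by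
        rw [integral_finset_sum]
        · refine Finset.sum_congr rfl fun l _ => ?_
          rw [integral_finset_sum]
          intro k _
          exact (((hX k l).const_mul _).mul_const _)
        · intro l _
          exact integrable_finset_sum _ fun k _ => (((hX k l).const_mul _).mul_const _)
    _ = ∑ l, ∑ k, M i k * (∫ ω, X ω k l ∂μ) * N l j := by
        refine Finset.sum_congr rfl fun l _ => Finset.sum_congr rfl fun k _ => ?_
        rw [show (fun ω => M i k * X ω k l * N l j) = fun ω => (M i k * N l j) * X ω k l
          from funext fun ω => by ring, integral_const_mul]
        ring
    _ = (M * matMean μ X * N) i j := by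
        simp [Matrix.mul_apply, matMean, Finset.sum_mul]

lemma ema_conj (β : ℝ) {T a : ℕ} (M N : Matrix (Fin a) (Fin a) ℝ)
    (X : Fin T → Matrix (Fin a) (Fin a) ℝ) :
    ema β (fun t => M * X t * N) = M * ema β X * N := by
  unfold ema
  rw [Matrix.mul_smul, Matrix.smul_mul, Finset.mul_sum, Finset.sum_mul]
  congr 1
  refine Finset.sum_congr rfl fun t _ => ?_
  rw [Matrix.mul_smul, Matrix.smul_mul]

lemma key_iff {a : ℕ} {P L : Matrix (Fin a) (Fin a) ℝ} (hP : P.PosDef)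
    (hL : L.PosSemidef) (hLdet : IsUnit L.det) : P * L * P = 1 ↔ P = hL.sqrt⁻¹ := by
  set S := hL.sqrt with hSdef
  have hSS : S * S = L := psd_sqrt_mul_self hL
  have hSdet : IsUnit S.det := by
    have : IsUnit (S.det * S.det) := by
      rw [← Matrix.det_mul, hSS]; exact hLdet
    exact isUnit_of_mul_isUnit_left this
  have hPdet : IsUnit P.det := isUnit_iff_ne_zero.mpr hP.det_pos.ne'
  constructor
  · intro h
    have hLP : L = P⁻¹ * P⁻¹ := by
      have := congrArg (fun M => P⁻¹ * M * P⁻¹) h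
      rw [Matrix.mul_one] at this
      calc L = (P⁻¹ * P) * L * (P * P⁻¹) := by
              rw [Matrix.nonsing_inv_mul _ hPdet, Matrix.mul_nonsing_inv _ hPdet,
                Matrix.one_mul, Matrix.mul_one]
        _ = P⁻¹ * (P * L * P) * P⁻¹ := by
              simp only [Matrix.mul_assoc]
        _ = P⁻¹ * P⁻¹ := by rw [h, Matrix.mul_one]
    have hPinv : (P⁻¹).PosDef := hP.inv
    have hsq : (P⁻¹) ^ 2 = L := by rw [pow_two, hLP]
    have : P⁻¹ = hL.sqrt := psd_eq_sqrt_of_sq_eq hPinv.posSemidef hL hsq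
    rw [← Matrix.nonsing_inv_nonsing_inv P hPdet, this]
  · rintro rfl
    rw [← hSS, ← Matrix.mul_assoc S⁻¹ S S, Matrix.nonsing_inv_mul _ hSdet,
      Matrix.one_mul, Matrix.mul_nonsing_inv _ hSdet]

/-- **Characterization of time-averaged orthogonality in expectation (idealized KL-Shampoo).**
Let `G_1, …, G_T` be random `m × n` matrices with finite second moments, `β ∈ [0,1)`, and let
`A`, `B` be symmetric positive definite with `EMA(E[G_t B² G_tᵀ])` and `EMA(E[G_tᵀ A² G_t])`
invertible.  Then the sequence `Z_t = A G_t B` is time-averaged orthogonal in expectation,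
i.e. `EMA(E[Z_t Z_tᵀ]) = I_m` and `EMA(E[Z_tᵀ Z_t]) = I_n`, if and only if
`A = EMA(E[G_t B² G_tᵀ])^{−1/2}` and `B = EMA(E[G_tᵀ A² G_t])^{−1/2}`. -/
theorem statement8 {Ω : Type*} [MeasurableSpace Ω] (μ : Measure Ω) [IsProbabilityMeasure μ]
    {m n T : ℕ} (G : Fin T → Ω → Matrix (Fin m) (Fin n) ℝ)
    (hg2 : ∀ t i j, MemLp (fun ω => G t ω i j) 2 μ)
    (β : ℝ) (hβ0 : 0 ≤ β) (hβ1 : β < 1)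
    (A : Matrix (Fin m) (Fin m) ℝ) (B : Matrix (Fin n) (Fin n) ℝ)
    (hA : A.PosDef) (hB : B.PosDef)
    (hL : (ema β fun t => matMean μ fun ω => G t ω * (B * B) * (G t ω)ᵀ).PosSemidef)
    (hLinv : IsUnit (ema β fun t => matMean μ fun ω => G t ω * (B * B) * (G t ω)ᵀ).det)
    (hR : (ema β fun t => matMean μ fun ω => (G t ω)ᵀ * (A * A) * G t ω).PosSemidef)
    (hRinv : IsUnit (ema β fun t => matMean μ fun ω => (G t ω)ᵀ * (A * A) * G t ω).det) :
    ((ema β fun t => matMean μ fun ω => (A * G t ω * B) * (A * G t ω * B)ᵀ) = 1 ∧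
     (ema β fun t => matMean μ fun ω => (A * G t ω * B)ᵀ * (A * G t ω * B)) = 1) ↔
      (A = hL.sqrt⁻¹ ∧ B = hR.sqrt⁻¹) := by
  have hAt : Aᵀ = A := by
    have := hA.isHermitian.eq
    rwa [← Matrix.conjTranspose_eq_transpose_of_trivial]
  have hBt : Bᵀ = B := by
    have := hB.isHermitian.eq
    rwa [← Matrix.conjTranspose_eq_transpose_of_trivial]
  have hmul : ∀ t (i : Fin m) (p : Fin n) (j : Fin m) (q : Fin n),
      Integrable (fun ω => G t ω i p * G t ω j q) μ := by
    intro t i p j q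
    have h12 : (1 : ENNReal) / 1 = 1 / 2 + 1 / 2 := by
      simp [one_div, ENNReal.inv_two_add_inv_two]
    exact memLp_one_iff_integrable.mp ((hg2 t j q).smul (r := 1) (hg2 t i p)
      (hpqr := ⟨by simpa [one_div] using h12.symm⟩))
  have hintL : ∀ t i j, Integrable (fun ω => (G t ω * (B * B) * (G t ω)ᵀ) i j) μ := by
    intro t i j
    have heq : (fun ω => (G t ω * (B * B) * (G t ω)ᵀ) i j)
        = fun ω => ∑ k, ∑ p, (B * B) p k * (G t ω i p * G t ω j k) := by
      funext ω
      simp only [Matrix.mul_apply, Matrix.transpose_apply, Finset.sum_mul]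
      refine Finset.sum_congr rfl fun k _ => Finset.sum_congr rfl fun p _ => ?_
      simp only [Finset.sum_mul, Finset.mul_sum]
      exact Finset.sum_congr rfl fun x _ => by ring
    rw [heq]
    exact integrable_finset_sum _ fun k _ => integrable_finset_sum _ fun p _ =>
      (hmul t i p j k).const_mul _
  have hintR : ∀ t i j, Integrable (fun ω => ((G t ω)ᵀ * (A * A) * G t ω) i j) μ := by
    intro t i j
    have heq : (fun ω => ((G t ω)ᵀ * (A * A) * G t ω) i j)
        = fun ω => ∑ k, ∑ p, (A * A) p k * (G t ω p i * G t ω k j) := by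
      funext ω
      simp only [Matrix.mul_apply, Matrix.transpose_apply, Finset.sum_mul]
      refine Finset.sum_congr rfl fun k _ => Finset.sum_congr rfl fun p _ => ?_
      simp only [Finset.sum_mul, Finset.mul_sum]
      exact Finset.sum_congr rfl fun x _ => by ring
    rw [heq]
    exact integrable_finset_sum _ fun k _ => integrable_finset_sum _ fun p _ =>
      (hmul t p i k j).const_mul _
  have hZL : (fun t => matMean μ fun ω => (A * G t ω * B) * (A * G t ω * B)ᵀ)
      = fun t => A * (matMean μ fun ω => G t ω * (B * B) * (G t ω)ᵀ) * A := by
    funext t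
    rw [← matMean_conj μ A A _ (hintL t)]
    refine congrArg (matMean μ) (funext fun ω => ?_)
    rw [Matrix.transpose_mul, Matrix.transpose_mul, hAt, hBt]
    simp only [Matrix.mul_assoc]
  have hZR : (fun t => matMean μ fun ω => (A * G t ω * B)ᵀ * (A * G t ω * B))
      = fun t => B * (matMean μ fun ω => (G t ω)ᵀ * (A * A) * G t ω) * B := by
    funext t
    rw [← matMean_conj μ B B _ (hintR t)]
    refine congrArg (matMean μ) (funext fun ω => ?_)
    rw [Matrix.transpose_mul, Matrix.transpose_mul, hAt, hBt]
    simp only [Matrix.mul_assoc]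
  refine and_congr ?_ ?_
  · rw [hZL, ema_conj]
    exact key_iff hA hL hLinv
  · rw [hZR, ema_conj]
    exact key_iff hB hR hRinv
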